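/- Fix X, S ∈ ℝ^{m×n} with m ≤ n, λ₁ > 0, 0 < p < 1, ε > 0, and μ₁ > 1. Define F(L) = λ₁·Σ_{i=1}^m (σ_i(L) + ε)^p + (1/2)·‖L + S − X‖_F². Suppose a sequence (L^k) satisfies F(L^{k+1}) ≤ F(L^k) for all k (as produced by the proximal iteratively reweighted updates). Then the sequence (L^k) is bounded in Frobenius norm: there exists C such that ‖L^k‖_F ≤ C for all k. -/
import Mathlib

/-- Squared Frobenius norm of a real matrix. -/
noncomputable def frobNormSq {m n : ℕ} (A : Matrix (Fin m) (Fin n) ℝ) : ℝ :=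
  ∑ i, ∑ j, (A i j) ^ 2

/-- Frobenius norm of a real matrix. -/
noncomputable def frobNorm {m n : ℕ} (A : Matrix (Fin m) (Fin n) ℝ) : ℝ :=
  Real.sqrt (frobNormSq A)

/-- The singular values of a real `m × n` matrix `A`, arranged in nonincreasing order:
the square roots of the eigenvalues of `A * Aᵀ`, sorted in nonincreasing order. -/
noncomputable def singularValues {m n : ℕ} (A : Matrix (Fin m) (Fin n) ℝ) :
    Fin (min m n) → ℝ := fun i =>
  Real.sqrt
    ((Matrix.isHermitian_mul_conjTranspose_self A).eigenvalues
      (Tuple.sort (fun j => -(Matrix.isHermitian_mul_conjTranspose_self A).eigenvalues j)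
        (Fin.castLE (min_le_left m n) i)))

attribute [local instance] Matrix.frobeniusSeminormedAddCommGroup

lemma frobNorm_eq_norm {m n : ℕ} (A : Matrix (Fin m) (Fin n) ℝ) : frobNorm A = ‖A‖ := by
  rw [Matrix.frobenius_norm_def, frobNorm, frobNormSq,
    Real.sqrt_eq_rpow]
  congr 1
  refine Finset.sum_congr rfl fun i _ => Finset.sum_congr rfl fun j _ => ?_
  rw [Real.norm_eq_abs, show (2:ℝ) = ((2:ℕ):ℝ) by norm_num, Real.rpow_natCast, sq_abs]

lemma frobNormSq_nonneg {m n : ℕ} (A : Matrix (Fin m) (Fin n) ℝ) : 0 ≤ frobNormSq A :=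
  Finset.sum_nonneg fun _ _ => Finset.sum_nonneg fun _ _ => sq_nonneg _

/-- If the smoothed low-rank objective values `F(L^k)` are nonincreasing along a sequence,
then the sequence `(L^k)` is bounded in Frobenius norm. -/
theorem pira_iterates_bounded {m n : ℕ} (hmn : m ≤ n)
    (X S : Matrix (Fin m) (Fin n) ℝ) (lam1 p ε μ1 : ℝ)
    (hlam1 : 0 < lam1) (hp0 : 0 < p) (hp1 : p < 1) (hε : 0 < ε) (hμ1 : 1 < μ1)
    (F : Matrix (Fin m) (Fin n) ℝ → ℝ)
    (hF : ∀ L, F L = lam1 * (∑ i, (singularValues L i + ε) ^ p)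
      + (1 / 2) * frobNormSq (L + S - X))
    (L : ℕ → Matrix (Fin m) (Fin n) ℝ)
    (hdec : ∀ k : ℕ, F (L (k + 1)) ≤ F (L k)) :
    ∃ C : ℝ, ∀ k : ℕ, frobNorm (L k) ≤ C := by
  have hmono : ∀ k, F (L k) ≤ F (L 0) := by
    intro k
    induction k with
    | zero => exact le_refl _
    | succ k ih => exact (hdec k).trans ih
  have hsig : ∀ (A : Matrix (Fin m) (Fin n) ℝ),
      0 ≤ lam1 * (∑ i, (singularValues A i + ε) ^ p) := by
    intro A
    refine mul_nonneg hlam1.le (Finset.sum_nonneg fun i _ => ?_)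
    exact Real.rpow_nonneg (add_nonneg (Real.sqrt_nonneg _) hε.le) p
  have hbound : ∀ k, frobNormSq (L k + S - X) ≤ 2 * F (L 0) := by
    intro k
    have h1 : (1 / 2) * frobNormSq (L k + S - X) ≤ F (L k) := by
      rw [hF]
      linarith [hsig (L k)]
    nlinarith [hmono k]
  refine ⟨Real.sqrt (2 * F (L 0)) + frobNorm (X - S), fun k => ?_⟩
  have hLk : L k = (L k + S - X) + (X - S) := by abel
  have htri : frobNorm (L k) ≤ frobNorm (L k + S - X) + frobNorm (X - S) := by
    rw [frobNorm_eq_norm, frobNorm_eq_norm, frobNorm_eq_norm, congrArg Norm.norm hLk]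
    exact norm_add_le (L k + S - X) (X - S)
  have h2 : frobNorm (L k + S - X) ≤ Real.sqrt (2 * F (L 0)) :=
    Real.sqrt_le_sqrt (hbound k)
  linarith
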